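/- arXiv:1804.09845 — 2 statements merged into one kernel-verified Lean document; each statement's English description precedes it below -/
import Mathlib

section
/- Let λ² be a positive integer. For a positive integer q, write q = q₁·2^r with q₁ odd, and set ρ(q,λ) = √(gcd(q₁, λ²)·2^r). Then for every real a > 1 and every positive integer N, ∑_{q ≥ N} q^{-a} ρ(q,λ) ≤ C_a · N^{1-a} · σ_{-1/2}(λ²), where σ_{-1/2}(m) = ∑_{d ∣ m} d^{-1/2} and C_a depends only on a. -/
/-!
Write `q = q₁ 2^r` with `q₁` odd. Then `ρ(q, λ) = √m` for `m = d 2^r`, where `d = gcd(q₁, λ²)`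
divides `λ²` and `m` divides `q`. So `ρ(q, λ)` is at most the sum of `√(d 2^r)` over all pairs
`(d, r)` with `d ∣ λ²` and `d 2^r ∣ q`. After exchanging the order of summation (in `ℝ≥0∞`,
where this needs no summability argument), the tail sum is at most
`∑_{d ∣ λ²} ∑_r √m ∑_{q ≥ N, m ∣ q} q^{-a}`. By the integral test, the innermost sum
`m^{-a} ∑_{k ≥ N/m} k^{-a}` is at most `a/(a-1) · N^{1-a}/m`. So the `(d, r)` term is at most
`a/(a-1) · N^{1-a} d^{-1/2} (2^{-1/2})^r`, and summing the geometric series in `r` gives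
`C_a = a/(a-1) · (1 - 2^{-1/2})⁻¹`.
-/

open Real Set

/-- `rho q m` is `ρ(q, λ)` for `m = λ²`; `q / 2 ^ q.factorization 2` is the odd part `q₁`. -/
noncomputable def rho (q m : ℕ) : ℝ :=
  √((Nat.gcd (q / 2 ^ q.factorization 2) m : ℝ) * 2 ^ q.factorization 2)

theorem tsum_ofReal_rpow_neg_nat_add_le {a : ℝ} (ha : 1 < a) {K : ℕ} (hK : 0 < K) :
    ∑' n : ℕ, ENNReal.ofReal (((n + K : ℕ) : ℝ) ^ (-a))
      ≤ ENNReal.ofReal (a / (a - 1) * (K : ℝ) ^ (1 - a)) := by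
  have hK' : (0 : ℝ) < K := by exact_mod_cast hK
  have hsum : Summable fun n : ℕ => ((n + K : ℕ) : ℝ) ^ (-a) :=
    (summable_nat_add_iff K).mpr (Real.summable_nat_rpow.mpr (by linarith))
  have anti : AntitoneOn (fun x : ℝ => x ^ (-a)) (Ici (K : ℝ)) := fun x hx y _ hxy =>
    Real.rpow_le_rpow_of_nonpos (hK'.trans_le hx) hxy (by linarith)
  have integral_test := anti.tsum_comp_add_le_integral K
    (integrableOn_Ioi_rpow_of_lt (by linarith) hK')
    (fun t ht => (Real.rpow_pos_of_pos (hK'.trans ht) _).le)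
  rw [integral_Ioi_rpow_of_lt (by linarith) hK'] at integral_test
  have first_term : (K : ℝ) ^ (-a) ≤ (K : ℝ) ^ (1 - a) :=
    Real.rpow_le_rpow_of_exponent_le (by exact_mod_cast hK) (by linarith)
  have ha1 : 0 < a - 1 := by linarith
  rw [← ENNReal.ofReal_tsum_of_nonneg (fun _ => by positivity) hsum]
  refine ENNReal.ofReal_le_ofReal ?_
  rw [hsum.tsum_eq_zero_add]
  simp only [zero_add, add_right_comm _ 1 K]
  calc (K : ℝ) ^ (-a) + ∑' n : ℕ, ((n + K + 1 : ℕ) : ℝ) ^ (-a)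
      ≤ (K : ℝ) ^ (1 - a) + (K : ℝ) ^ (1 - a) / (a - 1) := by
        refine add_le_add first_term (integral_test.trans_eq ?_)
        rw [show -a + 1 = 1 - a by ring, neg_div, ← div_neg, neg_sub]
    _ = a / (a - 1) * (K : ℝ) ^ (1 - a) := by field_simp; ring

theorem rpow_neg_mul_div_rpow_one_sub (a : ℝ) {x y : ℝ} (hx : 0 < x) (hy : 0 ≤ y) :
    x ^ (-a) * (y / x) ^ (1 - a) = y ^ (1 - a) / x := by
  rw [Real.div_rpow hy hx.le, mul_div_left_comm, ← Real.rpow_sub hx,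
    show -a - (1 - a) = -1 by ring, Real.rpow_neg_one, div_eq_mul_inv]

theorem tsum_ofReal_rpow_neg_multiples_le {a : ℝ} (ha : 1 < a) {m N : ℕ} (hm : 0 < m)
    (hN : 0 < N) :
    ∑' q : ℕ, (if N ≤ q ∧ m ∣ q then ENNReal.ofReal ((q : ℝ) ^ (-a)) else 0)
      ≤ ENNReal.ofReal (a / (a - 1) * (N : ℝ) ^ (1 - a) / m) := by
  have hm' : (0 : ℝ) < m := by exact_mod_cast hm
  set K := ⌈(N : ℝ) / m⌉₊
  have hK : 0 < K := Nat.ceil_pos.mpr (by positivity)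
  have le_mul_iff (k : ℕ) : N ≤ m * k ↔ K ≤ k := by
    rw [Nat.ceil_le, div_le_iff₀ hm', mul_comm, ← Nat.cast_mul, Nat.cast_le]
  -- the multiples of `m` that are at least `N` are exactly the `m * (n + K)`
  have hinj : Function.Injective fun n : ℕ => m * (n + K) := fun x y h => by
    simpa using Nat.eq_of_mul_eq_mul_left hm h
  have hsupp : Function.support (fun q : ℕ => if N ≤ q ∧ m ∣ q then
      ENNReal.ofReal ((q : ℝ) ^ (-a)) else 0) ⊆ Set.range fun n : ℕ => m * (n + K) := by
    intro q hq
    obtain ⟨hNq, k, rfl⟩ : N ≤ q ∧ m ∣ q := by by_contra h; exact hq (if_neg h)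
    exact ⟨k - K, show m * (k - K + K) = m * k by
      rw [Nat.sub_add_cancel ((le_mul_iff k).mp hNq)]⟩
  have hterm (n : ℕ) : (if N ≤ m * (n + K) ∧ m ∣ m * (n + K) then
      ENNReal.ofReal (((m * (n + K) : ℕ) : ℝ) ^ (-a)) else 0)
      = ENNReal.ofReal ((m : ℝ) ^ (-a)) * ENNReal.ofReal (((n + K : ℕ) : ℝ) ^ (-a)) := by
    rw [if_pos ⟨(le_mul_iff _).mpr (Nat.le_add_left K n), dvd_mul_right m _⟩,
      ← ENNReal.ofReal_mul (by positivity), Nat.cast_mul,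
      Real.mul_rpow (by positivity) (by positivity)]
  rw [← hinj.tsum_eq hsupp]
  simp only [hterm, ENNReal.tsum_mul_left]
  calc ENNReal.ofReal ((m : ℝ) ^ (-a)) * ∑' n : ℕ, ENNReal.ofReal (((n + K : ℕ) : ℝ) ^ (-a))
      ≤ ENNReal.ofReal ((m : ℝ) ^ (-a)) *
          ENNReal.ofReal (a / (a - 1) * (K : ℝ) ^ (1 - a)) := by
        gcongr
        exact tsum_ofReal_rpow_neg_nat_add_le ha hK
    _ ≤ ENNReal.ofReal ((m : ℝ) ^ (-a)) *
          ENNReal.ofReal (a / (a - 1) * ((N : ℝ) / m) ^ (1 - a)) := by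
        gcongr _ * ENNReal.ofReal (_ * ?_)
        exact Real.rpow_le_rpow_of_nonpos (by positivity) (Nat.le_ceil _) (by linarith)
    _ = ENNReal.ofReal (a / (a - 1) * (N : ℝ) ^ (1 - a) / m) := by
        rw [← ENNReal.ofReal_mul (by positivity), mul_left_comm,
          rpow_neg_mul_div_rpow_one_sub a hm' (Nat.cast_nonneg N), mul_div_assoc]

theorem two_rpow_neg_half_lt_one : (2 : ℝ) ^ (-(1 / 2 : ℝ)) < 1 :=
  Real.rpow_lt_one_of_one_lt_of_neg one_lt_two (by norm_num)

theorem tsum_ofReal_rpow_neg_half_mul_two_pow (d : ℕ) :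
    ∑' r : ℕ, ENNReal.ofReal (((d * 2 ^ r : ℕ) : ℝ) ^ (-(1 / 2 : ℝ)))
      = ENNReal.ofReal ((d : ℝ) ^ (-(1 / 2 : ℝ)) * (1 - 2 ^ (-(1 / 2 : ℝ)))⁻¹) := by
  have ht := two_rpow_neg_half_lt_one
  have hterm (r : ℕ) : ((d * 2 ^ r : ℕ) : ℝ) ^ (-(1 / 2 : ℝ))
      = (d : ℝ) ^ (-(1 / 2 : ℝ)) * ((2 : ℝ) ^ (-(1 / 2 : ℝ))) ^ r := by
    push_cast
    rw [Real.mul_rpow (by positivity) (by positivity), Real.rpow_pow_comm zero_le_two]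
  simp only [hterm]
  rw [← ENNReal.ofReal_tsum_of_nonneg (fun _ => by positivity)
    ((summable_geometric_of_lt_one (by positivity) ht).mul_left _), tsum_mul_left,
    tsum_geometric_of_lt_one (by positivity) ht]

theorem tsum_sqrt_mul_tsum_ofReal_rpow_neg_multiples_le {a : ℝ} (ha : 1 < a) {d N : ℕ}
    (hd : 0 < d) (hN : 0 < N) :
    ∑' r : ℕ, ENNReal.ofReal √((d * 2 ^ r : ℕ) : ℝ) *
        ∑' q : ℕ, (if N ≤ q ∧ d * 2 ^ r ∣ q then ENNReal.ofReal ((q : ℝ) ^ (-a)) else 0)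
      ≤ ENNReal.ofReal (a / (a - 1) * (N : ℝ) ^ (1 - a) *
          ((d : ℝ) ^ (-(1 / 2 : ℝ)) * (1 - 2 ^ (-(1 / 2 : ℝ)))⁻¹)) := by
  have sqrt_mul_div_self {x : ℝ} (hx : 0 ≤ x) (y : ℝ) :
      √x * (y / x) = y * x ^ (-(1 / 2 : ℝ)) := by
    rw [mul_div_left_comm, Real.sqrt_div_self', Real.rpow_neg hx, ← Real.sqrt_eq_rpow, one_div]
  have ha1 : 0 < a - 1 := by linarith
  calc _ ≤ ∑' r : ℕ, ENNReal.ofReal √((d * 2 ^ r : ℕ) : ℝ) *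
          ENNReal.ofReal (a / (a - 1) * (N : ℝ) ^ (1 - a) / (d * 2 ^ r : ℕ)) := by
        gcongr with r
        exact tsum_ofReal_rpow_neg_multiples_le ha (Nat.mul_pos hd (by positivity)) hN
    _ = ENNReal.ofReal (a / (a - 1) * (N : ℝ) ^ (1 - a)) *
          ∑' r : ℕ, ENNReal.ofReal (((d * 2 ^ r : ℕ) : ℝ) ^ (-(1 / 2 : ℝ))) := by
        rw [← ENNReal.tsum_mul_left]
        refine tsum_congr fun r => ?_
        rw [← ENNReal.ofReal_mul (Real.sqrt_nonneg _), ← ENNReal.ofReal_mul (by positivity),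
          sqrt_mul_div_self (Nat.cast_nonneg _)]
    _ = _ := by
        rw [tsum_ofReal_rpow_neg_half_mul_two_pow, ← ENNReal.ofReal_mul (by positivity)]

theorem exists_dvd_rho_eq_sqrt {m : ℕ} (hm : m ≠ 0) (q : ℕ) :
    ∃ d ∈ m.divisors, ∃ r : ℕ, d * 2 ^ r ∣ q ∧ rho q m = √((d * 2 ^ r : ℕ) : ℝ) := by
  refine ⟨_, Nat.mem_divisors.mpr ⟨Nat.gcd_dvd_right _ m, hm⟩, q.factorization 2, ?_, by
    rw [rho, Nat.cast_mul, Nat.cast_pow, Nat.cast_ofNat]⟩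
  calc Nat.gcd (q / 2 ^ q.factorization 2) m * 2 ^ q.factorization 2
      ∣ q / 2 ^ q.factorization 2 * 2 ^ q.factorization 2 :=
        Nat.mul_dvd_mul_right (Nat.gcd_dvd_left _ m) _
    _ = q := by rw [mul_comm]; exact Nat.ordProj_mul_ordCompl_eq_self q 2

theorem ofReal_rpow_neg_mul_rho_le (a : ℝ) {m : ℕ} (hm : m ≠ 0) (N q : ℕ) :
    ENNReal.ofReal (if N ≤ q ∧ 1 ≤ q then (q : ℝ) ^ (-a) * rho q m else 0)
      ≤ ∑ d ∈ m.divisors, ∑' r : ℕ, ENNReal.ofReal √((d * 2 ^ r : ℕ) : ℝ) *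
          if N ≤ q ∧ d * 2 ^ r ∣ q then ENNReal.ofReal ((q : ℝ) ^ (-a)) else 0 := by
  by_cases hNq : N ≤ q ∧ 1 ≤ q
  · obtain ⟨d, hd, r, hdvd, hrho⟩ := exists_dvd_rho_eq_sqrt hm q
    refine le_trans ?_ (Finset.single_le_sum (fun _ _ => zero_le) hd)
    refine le_trans (le_of_eq ?_) (ENNReal.le_tsum r)
    rw [if_pos hNq, if_pos ⟨hNq.1, hdvd⟩, hrho, mul_comm, ENNReal.ofReal_mul (by positivity)]
  · rw [if_neg hNq, ENNReal.ofReal_zero]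
    exact zero_le

theorem tsum_ofReal_rpow_neg_mul_rho_le {a : ℝ} (ha : 1 < a) {m N : ℕ} (hm : m ≠ 0)
    (hN : 0 < N) :
    ∑' q : ℕ, ENNReal.ofReal (if N ≤ q ∧ 1 ≤ q then (q : ℝ) ^ (-a) * rho q m else 0)
      ≤ ENNReal.ofReal (∑ d ∈ m.divisors, a / (a - 1) * (N : ℝ) ^ (1 - a) *
          ((d : ℝ) ^ (-(1 / 2 : ℝ)) * (1 - 2 ^ (-(1 / 2 : ℝ)))⁻¹)) := by
  have : 0 < 1 - (2 : ℝ) ^ (-(1 / 2 : ℝ)) := sub_pos.mpr two_rpow_neg_half_lt_one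
  have : 0 < a - 1 := by linarith
  rw [ENNReal.ofReal_sum_of_nonneg fun _ _ => by positivity]
  calc _ ≤ ∑' q : ℕ, ∑ d ∈ m.divisors, ∑' r : ℕ, ENNReal.ofReal √((d * 2 ^ r : ℕ) : ℝ) *
          if N ≤ q ∧ d * 2 ^ r ∣ q then ENNReal.ofReal ((q : ℝ) ^ (-a)) else 0 :=
        ENNReal.tsum_le_tsum fun q => ofReal_rpow_neg_mul_rho_le a hm N q
    _ = ∑ d ∈ m.divisors, ∑' r : ℕ, ENNReal.ofReal √((d * 2 ^ r : ℕ) : ℝ) *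
          ∑' q : ℕ, if N ≤ q ∧ d * 2 ^ r ∣ q then ENNReal.ofReal ((q : ℝ) ^ (-a)) else 0 := by
        rw [Summable.tsum_finsetSum fun _ _ => ENNReal.summable]
        refine Finset.sum_congr rfl fun d _ => ?_
        rw [ENNReal.tsum_comm]
        exact tsum_congr fun r => ENNReal.tsum_mul_left
    _ ≤ _ := Finset.sum_le_sum fun d hd =>
        tsum_sqrt_mul_tsum_ofReal_rpow_neg_multiples_le ha (Nat.pos_of_mem_divisors hd) hN

theorem tsum_le_of_tsum_ofReal_le {ι : Type*} {f : ι → ℝ} (hf : ∀ i, 0 ≤ f i) {B : ℝ}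
    (hB : 0 ≤ B) (h : ∑' i, ENNReal.ofReal (f i) ≤ ENNReal.ofReal B) : ∑' i, f i ≤ B := by
  have := ENNReal.toReal_le_of_le_ofReal hB h
  rwa [ENNReal.tsum_toReal_eq (fun _ => ENNReal.ofReal_ne_top),
    tsum_congr fun i => ENNReal.toReal_ofReal (hf i)] at this

/-- with `ρ(q,λ) = √(gcd(q₁, λ²)·2^r)` where `q = q₁·2^r`, `q₁` odd,
for every `a > 1` there is `C_a` such that for all positive `λ²` and `N ≥ 1`,
`∑_{q ≥ N} q^{-a} ρ(q,λ) ≤ C_a N^{1-a} σ_{-1/2}(λ²)`. -/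
theorem rho_tail_sum_bound (a : ℝ) (ha : 1 < a) :
    ∃ C : ℝ, 0 < C ∧ ∀ lamSq : ℕ, 0 < lamSq → ∀ N : ℕ, 1 ≤ N →
      (∑' q : ℕ, if N ≤ q ∧ 1 ≤ q then
          (q : ℝ) ^ (-a) *
            Real.sqrt ((Nat.gcd (q / 2 ^ (q.factorization 2)) lamSq : ℝ) *
              2 ^ (q.factorization 2))
        else 0)
      ≤ C * (N : ℝ) ^ (1 - a) * ∑ d ∈ lamSq.divisors, (d : ℝ) ^ (-(1/2 : ℝ)) := by
  have : 0 < 1 - (2 : ℝ) ^ (-(1 / 2 : ℝ)) := sub_pos.mpr two_rpow_neg_half_lt_one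
  have : 0 < a - 1 := by linarith
  refine ⟨a / (a - 1) * (1 - 2 ^ (-(1 / 2 : ℝ)))⁻¹, by positivity, fun m hm N hN => ?_⟩
  change ∑' q : ℕ, (if N ≤ q ∧ 1 ≤ q then (q : ℝ) ^ (-a) * rho q m else 0) ≤ _
  have hsum : ∑ d ∈ m.divisors, a / (a - 1) * (N : ℝ) ^ (1 - a) *
      ((d : ℝ) ^ (-(1 / 2 : ℝ)) * (1 - 2 ^ (-(1 / 2 : ℝ)))⁻¹)
      = a / (a - 1) * (1 - 2 ^ (-(1 / 2 : ℝ)))⁻¹ * (N : ℝ) ^ (1 - a) *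
        ∑ d ∈ m.divisors, (d : ℝ) ^ (-(1 / 2 : ℝ)) := by
    rw [Finset.mul_sum]
    exact Finset.sum_congr rfl fun d _ => by ring
  refine tsum_le_of_tsum_ofReal_le (fun q => ?_) (by positivity) ?_
  · unfold rho; split_ifs <;> positivity
  · exact hsum ▸ tsum_ofReal_rpow_neg_mul_rho_le ha hm.ne' hN
end

section
/- Let λ² be a positive integer and define ρ(q,λ) = √(gcd(q₁, λ²)·2^r) where q = q₁·2^r with q₁ odd. Then for every η > 0 there is a constant C_η (depending only on η) such that for all positive integers N, ∑_{1 ≤ q ≤ N} q^η ρ(q,λ) ≤ C_η · N^{1+η} · σ_{-1/2}(λ²). -/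
/-!
Since `gcd(q₁, λ²)` is one of the divisors `d ∣ λ²` with `d ∣ q₁`, `ρ(q, λ)` is at most
`∑ √(d 2^r)` over those divisors, and after swapping the sums it suffices to bound, for each
`d ∣ λ²`, the sum of `√(d 2^r)` over `q ≤ N` with `d ∣ q₁`. For even `d` it is empty; for odd
`d` the `q` are the multiples `d m` with `m ≤ N / d`, and `2^r` is the `2`-part of `m`, so it is
`√d ∑_{m ≤ N/d} √(2^{v₂(m)}) ≤ √d · 4N/d = 4N d^{-1/2}`. The factor `q^η` is at most `N^η`.
-/

open Finset

namespace Nat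

theorem sum_Icc_filter_dvd {M : Type*} [AddCommMonoid M] (f : ℕ → M) {d : ℕ} (hd : 0 < d)
    (N : ℕ) : ∑ q ∈ Icc 1 N with d ∣ q, f q = ∑ m ∈ Icc 1 (N / d), f (d * m) := by
  have hmultiples : {q ∈ Icc 1 N | d ∣ q} = (Icc 1 (N / d)).image (d * ·) := by
    ext q
    simp only [mem_filter, mem_Icc, mem_image, le_div_iff_mul_le hd]
    constructor
    · rintro ⟨⟨hq, hqN⟩, m, rfl⟩
      exact ⟨m, ⟨Nat.pos_of_mul_pos_left hq, by linarith [mul_comm d m]⟩, rfl⟩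
    · rintro ⟨m, ⟨hm, hmN⟩, rfl⟩
      exact ⟨⟨mul_pos hd hm, by linarith [mul_comm d m]⟩, dvd_mul_right d m⟩
  rw [hmultiples, sum_image fun a _ b _ h => Nat.eq_of_mul_eq_mul_left hd h]

theorem factorization_mul_apply_of_not_dvd {p d m : ℕ} (hd : ¬p ∣ d) :
    (d * m).factorization p = m.factorization p := by
  rcases eq_or_ne m 0 with rfl | hm
  · simp
  rw [factorization_mul (by rintro rfl; exact hd (dvd_zero p)) hm, Finsupp.add_apply,
    factorization_eq_zero_of_not_dvd hd, zero_add]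

end Nat

/-- Splitting off the multiples of `p` gives `S(M) ≤ √p · S(M / p) + M`, and the bound `4 M`
survives this recursion because `4 / √p + 1 ≤ 4`. -/
theorem sum_sqrt_prime_pow_factorization_le {p : ℕ} (hp : p.Prime) (M : ℕ) :
    ∑ m ∈ Icc 1 M, √((p : ℝ) ^ m.factorization p) ≤ 4 * M := by
  induction M using Nat.strong_induction_on with
  | _ M ih =>
  rcases M.eq_zero_or_pos with rfl | hM
  · simp
  set S : ℕ → ℝ := fun M => ∑ m ∈ Icc 1 M, √((p : ℝ) ^ m.factorization p)
  have hmultiples : ∑ m ∈ Icc 1 M with p ∣ m, √((p : ℝ) ^ m.factorization p)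
      = √p * S (M / p) := by
    rw [Nat.sum_Icc_filter_dvd _ hp.pos, mul_sum]
    refine sum_congr rfl fun m hm => ?_
    rw [Nat.factorization_mul hp.ne_zero (by grind), Finsupp.add_apply,
      hp.factorization_self, pow_add, pow_one, Real.sqrt_mul (by positivity), mul_comm]
  have hnonmultiples : ∑ m ∈ Icc 1 M with ¬p ∣ m, √((p : ℝ) ^ m.factorization p) ≤ M := by
    calc _ ≤ #{m ∈ Icc 1 M | ¬p ∣ m} • (1 : ℝ) :=
          sum_le_card_nsmul _ _ _ fun m hm => by
            rw [Nat.factorization_eq_zero_of_not_dvd (mem_filter.1 hm).2]; simp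
      _ ≤ M := by
          rw [nsmul_one]
          exact_mod_cast (card_filter_le _ _).trans (by simp)
  have hsqrt : (4 / 3 : ℝ) ≤ √p := by
    rw [Real.le_sqrt (by norm_num) (by positivity)]
    have : (2 : ℝ) ≤ p := by exact_mod_cast hp.two_le
    linarith
  have hquot : √p * ((M / p : ℕ) : ℝ) ≤ 3 / 4 * M := by
    calc √p * ((M / p : ℕ) : ℝ) ≤ √p * (M / p) := by gcongr; exact Nat.cast_div_le
      _ = M / √p := by
        rw [mul_div, mul_comm, mul_div_assoc, Real.sqrt_div_self, div_eq_mul_inv]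
      _ ≤ M / (4 / 3) := by gcongr
      _ = 3 / 4 * M := by ring
  calc S M = √p * S (M / p) + ∑ m ∈ Icc 1 M with ¬p ∣ m, √((p : ℝ) ^ m.factorization p) := by
        rw [← hmultiples, sum_filter_add_sum_filter_not]
    _ ≤ √p * (4 * (M / p : ℕ)) + M := by
        gcongr
        exact ih _ (Nat.div_lt_self hM hp.one_lt)
    _ ≤ 4 * M := by linarith

theorem sum_ite_dvd_ordCompl_sqrt_le {p d : ℕ} (hp : p.Prime) (hd : 0 < d) (N : ℕ) :
    ∑ q ∈ Icc 1 N, (if d ∣ ordCompl[p] q then √((d : ℝ) * p ^ q.factorization p) else 0)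
      ≤ 4 * N * (d : ℝ) ^ (-(1 / 2 : ℝ)) := by
  by_cases hpd : p ∣ d
  · have hzero : ∀ q ∈ Icc 1 N,
        (if d ∣ ordCompl[p] q then √((d : ℝ) * p ^ q.factorization p) else 0) = 0 :=
      fun q hq => if_neg fun h => Nat.not_dvd_ordCompl hp (by grind) (hpd.trans h)
    rw [sum_congr rfl hzero, sum_const_zero]
    positivity
  have hterm : ∀ q ∈ Icc 1 N,
      (if d ∣ ordCompl[p] q then √((d : ℝ) * p ^ q.factorization p) else 0)
        ≤ √d * if d ∣ q then √((p : ℝ) ^ q.factorization p) else 0 := by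
    intro q _
    split_ifs with h h'
    · rw [Real.sqrt_mul (Nat.cast_nonneg d)]
    · exact absurd (h.trans (Nat.ordCompl_dvd q p)) h'
    · positivity
    · simp
  have hmultiples : ∑ q ∈ Icc 1 N, (if d ∣ q then √((p : ℝ) ^ q.factorization p) else 0)
      = ∑ m ∈ Icc 1 (N / d), √((p : ℝ) ^ m.factorization p) := by
    rw [← sum_filter, Nat.sum_Icc_filter_dvd _ hd]
    simp only [Nat.factorization_mul_apply_of_not_dvd hpd]
  have hsqrt : (d : ℝ) ^ (-(1 / 2 : ℝ)) = (√d)⁻¹ := by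
    rw [Real.rpow_neg (Nat.cast_nonneg d), ← Real.sqrt_eq_rpow]
  calc _ ≤ √d * ∑ m ∈ Icc 1 (N / d), √((p : ℝ) ^ m.factorization p) := by
        rw [← hmultiples, mul_sum]
        exact sum_le_sum hterm
    _ ≤ √d * (4 * (N / d : ℝ)) := by
        gcongr
        exact (sum_sqrt_prime_pow_factorization_le hp _).trans (by gcongr; exact Nat.cast_div_le)
    _ = 4 * N * (d : ℝ) ^ (-(1 / 2 : ℝ)) := by
        rw [hsqrt, ← Real.sqrt_div_self]
        ring

theorem sqrt_gcd_mul_le_sum_divisors {a n : ℕ} (hn : n ≠ 0) (x : ℝ) :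
    √(a.gcd n * x) ≤ ∑ d ∈ n.divisors, if d ∣ a then √(d * x) else 0 := by
  have hmem : a.gcd n ∈ n.divisors := Nat.mem_divisors.2 ⟨Nat.gcd_dvd_right a n, hn⟩
  calc √(a.gcd n * x) = if a.gcd n ∣ a then √(a.gcd n * x) else 0 := by
        rw [if_pos (Nat.gcd_dvd_left a n)]
    _ ≤ _ := single_le_sum (f := fun d => if d ∣ a then √(d * x) else 0)
        (fun d _ => by positivity) hmem

/-- with `ρ(q,λ) = √(gcd(q₁, λ²)·2^r)` where `q = q₁·2^r`, `q₁` odd,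
for every `η > 0` there is `C_η` such that for all positive `λ²` and `N ≥ 1`,
`∑_{1 ≤ q ≤ N} q^η ρ(q,λ) ≤ C_η N^{1+η} σ_{-1/2}(λ²)`. -/
theorem rho_initial_sum_bound (η : ℝ) (hη : 0 < η) :
    ∃ C : ℝ, 0 < C ∧ ∀ lamSq : ℕ, 0 < lamSq → ∀ N : ℕ, 1 ≤ N →
      (∑ q ∈ Finset.Icc 1 N,
          (q : ℝ) ^ η *
            Real.sqrt ((Nat.gcd (q / 2 ^ (q.factorization 2)) lamSq : ℝ) *
              2 ^ (q.factorization 2)))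
      ≤ C * (N : ℝ) ^ (1 + η) * ∑ d ∈ lamSq.divisors, (d : ℝ) ^ (-(1/2 : ℝ)) := by
  refine ⟨4, by norm_num, fun lamSq hlamSq N hN => ?_⟩
  set contrib : ℕ → ℕ → ℝ := fun d q =>
    if d ∣ ordCompl[2] q then √((d : ℝ) * 2 ^ q.factorization 2) else 0
  have hterm : ∀ q ∈ Icc 1 N, (q : ℝ) ^ η *
      √((Nat.gcd (ordCompl[2] q) lamSq : ℝ) * 2 ^ q.factorization 2)
        ≤ (N : ℝ) ^ η * ∑ d ∈ lamSq.divisors, contrib d q := fun q hq => by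
    gcongr
    · exact_mod_cast (mem_Icc.1 hq).2
    · exact sqrt_gcd_mul_le_sum_divisors hlamSq.ne' _
  calc _ ≤ ∑ q ∈ Icc 1 N, (N : ℝ) ^ η * ∑ d ∈ lamSq.divisors, contrib d q := sum_le_sum hterm
    _ = (N : ℝ) ^ η * ∑ d ∈ lamSq.divisors, ∑ q ∈ Icc 1 N, contrib d q := by
        rw [← mul_sum, sum_comm]
    _ ≤ (N : ℝ) ^ η * ∑ d ∈ lamSq.divisors, 4 * N * (d : ℝ) ^ (-(1 / 2 : ℝ)) := by
        gcongr with d hd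
        simpa only [Nat.cast_ofNat] using
          sum_ite_dvd_ordCompl_sqrt_le Nat.prime_two (Nat.pos_of_mem_divisors hd) N
    _ = 4 * (N : ℝ) ^ (1 + η) * ∑ d ∈ lamSq.divisors, (d : ℝ) ^ (-(1 / 2 : ℝ)) := by
        rw [Real.rpow_add (by positivity), Real.rpow_one, ← mul_sum]
        ring
end
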